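/- Let W and W′ be graphons and H a graph with e(H) edges. Then |t(H,W) − t(H,W′)| ≤ e(H) · d_□(W,W′), where d_□ is the cut distance. -/

import Mathlib

open MeasureTheory

noncomputable section

/-- The Lebesgue measure restricted to `[0,1]`. -/
abbrev muI : Measure ℝ := volume.restrict (Set.Icc 0 1)

/-- A graphon: a symmetric measurable function `[0,1]² → [0,1]`
(represented as a function on `ℝ²`). -/
def IsGraphon (W : ℝ → ℝ → ℝ) : Prop :=
  Measurable (Function.uncurry W) ∧ (∀ x y, W x y = W y x) ∧
    (∀ x y, W x y ∈ Set.Icc (0:ℝ) 1)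

/-- The edges of a graph on `Fin m`, each listed once as an ordered pair. -/
def edgeFinset' {m : ℕ} (G : SimpleGraph (Fin m)) [DecidableRel G.Adj] :
    Finset (Fin m × Fin m) :=
  Finset.univ.filter fun p => p.1 < p.2 ∧ G.Adj p.1 p.2

/-- The number of edges of `G`. -/
def edgeCount {m : ℕ} (G : SimpleGraph (Fin m)) [DecidableRel G.Adj] : ℕ :=
  (edgeFinset' G).card

/-- The homomorphism density `t(G, W)`. -/
def homDensity {m : ℕ} (G : SimpleGraph (Fin m)) [DecidableRel G.Adj]
    (W : ℝ → ℝ → ℝ) : ℝ :=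
  ∫ x : Fin m → ℝ, ∏ p ∈ edgeFinset' G, W (x p.1) (x p.2)
    ∂(Measure.pi fun _ => muI)

/-- The single-edge graph `K₂`. -/
abbrev K2 : SimpleGraph (Fin 2) := ⊤

/-- The complete bipartite graph `K_{a,b}` on `Fin (a+b)`. -/
def bip (a b : ℕ) : SimpleGraph (Fin (a + b)) where
  Adj i j := (decide (i.val < a)) ≠ (decide (j.val < a))
  symm := ⟨fun _ _ h => h.symm⟩
  loopless := ⟨fun _ h => h rfl⟩

instance (a b : ℕ) : DecidableRel (bip a b).Adj :=
  fun i j => inferInstanceAs (Decidable (_ ≠ _))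

/-- The cycle `C_n` on `Fin n` (for `n ≥ 3`). -/
def cyc (n : ℕ) : SimpleGraph (Fin n) where
  Adj i j := i ≠ j ∧ ((i.val + 1) % n = j.val ∨ (j.val + 1) % n = i.val)
  symm := ⟨fun _ _ h => ⟨h.1.symm, h.2.symm⟩⟩
  loopless := ⟨fun _ h => h.1 rfl⟩

instance (n : ℕ) : DecidableRel (cyc n).Adj :=
  fun i j => inferInstanceAs (Decidable (_ ∧ _))

/-- The cut norm `‖U‖_□` of a kernel (over `[0,1]²`). -/
def cutNorm (U : ℝ → ℝ → ℝ) : ℝ :=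
  sSup {r : ℝ | ∃ S T : Set ℝ, MeasurableSet S ∧ MeasurableSet T ∧
    r = |∫ x in Set.Icc (0:ℝ) 1 ∩ S, ∫ y in Set.Icc (0:ℝ) 1 ∩ T, U x y|}

/-- The cut distance `d_□(W,W')`: infimum of `‖W^φ − W'‖_□` over measure
preserving maps `φ` of `[0,1]`. -/
def cutDist (W W' : ℝ → ℝ → ℝ) : ℝ :=
  sInf {r : ℝ | ∃ φ : ℝ → ℝ, MeasurePreserving φ muI muI ∧
    r = cutNorm (fun x y => W (φ x) (φ y) - W' x y)}

/-!
Swapping the edges of `H` from `W` to `W'` one at a time writes `t(H, W) - t(H, W')` as a sum of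
`e(H)` integrals `∫ (W - W')(x_a, x_b) · ∏ (other edge factors)`. With all vertices but `a, b`
frozen, the other factors split as `f(x_a) g(x_b)` with `0 ≤ f, g ≤ 1`, and the layer-cake formula
`f(s) = ∫₀¹ 1[u < f(s)] du` turns `∫∫ U(s,t) f(s) g(t)` into an average of integrals of `U` over
rectangles `S × T`, each bounded by `‖U‖_□`. Since `t(H, W^φ) = t(H, W)` for measure-preserving
`φ`, the bound passes to the infimum defining `d_□`.
-/

open MeasureTheory Function Set

instance : IsProbabilityMeasure muI := ⟨by simp [Real.volume_Icc]⟩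

lemma abs_le_one_of_mem_Icc {x : ℝ} (hx : x ∈ Icc (0 : ℝ) 1) : |x| ≤ 1 :=
  abs_le.mpr ⟨by linarith [hx.1], hx.2⟩

lemma Finset.prod_mem_Icc_zero_one {ι : Type*} (s : Finset ι) {f : ι → ℝ}
    (hf : ∀ i ∈ s, f i ∈ Set.Icc (0 : ℝ) 1) : ∏ i ∈ s, f i ∈ Set.Icc (0 : ℝ) 1 :=
  ⟨Finset.prod_nonneg fun i hi => (hf i hi).1,
    Finset.prod_le_one (fun i hi => (hf i hi).1) fun i hi => (hf i hi).2⟩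

lemma le_mul_csInf_of_forall_le_mul {s : Set ℝ} (hs : s.Nonempty) {a c : ℝ} (ha : 0 ≤ a)
    (h : ∀ r ∈ s, c ≤ a * r) : c ≤ a * sInf s := by
  rw [← smul_eq_mul, ← Real.sInf_smul_of_nonneg ha]
  exact le_csInf hs.smul_set (by rintro _ ⟨r, hr, rfl⟩; exact h r hr)

lemma Finset.abs_sub_le_card_mul_of_abs_sub_insert_le {α : Type*} [DecidableEq α]
    (E : Finset α) (d : Finset α → ℝ) {c : ℝ}
    (h : ∀ q ∈ E, ∀ A ⊆ E, q ∉ A → |d A - d (insert q A)| ≤ c) :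
    |d ∅ - d E| ≤ E.card * c := by
  suffices ∀ A ⊆ E, |d ∅ - d A| ≤ A.card * c from this E subset_rfl
  intro A
  induction A using Finset.induction_on with
  | empty => simp
  | @insert q A hqA ih =>
    intro hAE
    have hq : q ∈ E := hAE (Finset.mem_insert_self q A)
    have hA : A ⊆ E := (Finset.subset_insert q A).trans hAE
    rw [Finset.card_insert_of_notMem hqA, Nat.cast_succ, add_mul, one_mul]
    exact (abs_sub_le _ _ _).trans (add_le_add (ih hA) (h q hq A hA hqA))

section Integrals

variable {α : Type*} [MeasurableSpace α] {μ : Measure α}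

lemma integrable_of_abs_le_one [IsFiniteMeasure μ] {f : α → ℝ} (hf : Measurable f)
    (hb : ∀ x, |f x| ≤ 1) : Integrable f μ :=
  .of_bound hf.aestronglyMeasurable 1 (ae_of_all _ hb)

lemma abs_integral_le_of_forall_abs_le [IsProbabilityMeasure μ] {f : α → ℝ} {C : ℝ}
    (h : ∀ x, |f x| ≤ C) : |∫ x, f x ∂μ| ≤ C := by
  simpa using norm_integral_le_of_norm_le_const (μ := μ) (f := f) (ae_of_all _ h)

end Integrals

section CutNorm

lemma abs_setIntegral_Icc_inter_le {f : ℝ → ℝ} {C : ℝ} (hC : 0 ≤ C) (hf : ∀ x, |f x| ≤ C)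
    (A : Set ℝ) : |∫ x in Icc (0 : ℝ) 1 ∩ A, f x| ≤ C := by
  have hA : volume (Icc (0 : ℝ) 1 ∩ A) ≤ 1 :=
    (measure_mono inter_subset_left).trans (by simp)
  calc |∫ x in Icc (0 : ℝ) 1 ∩ A, f x| ≤ C * volume.real (Icc (0 : ℝ) 1 ∩ A) := by
        rw [← Real.norm_eq_abs]
        exact norm_setIntegral_le_of_norm_le_const (hA.trans_lt ENNReal.one_lt_top)
          fun x _ => hf x
    _ ≤ C := mul_le_of_le_one_right hC
        (ENNReal.toReal_le_of_le_ofReal zero_le_one (by simpa))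

variable {U : ℝ → ℝ → ℝ}

lemma bddAbove_cutNorm_set (hU : ∀ x y, |U x y| ≤ 1) :
    BddAbove {r : ℝ | ∃ S T : Set ℝ, MeasurableSet S ∧ MeasurableSet T ∧
      r = |∫ x in Icc (0 : ℝ) 1 ∩ S, ∫ y in Icc (0 : ℝ) 1 ∩ T, U x y|} := by
  refine ⟨1, ?_⟩
  rintro r ⟨S, T, -, -, rfl⟩
  exact abs_setIntegral_Icc_inter_le zero_le_one
    (fun x => abs_setIntegral_Icc_inter_le zero_le_one (hU x) T) S

lemma abs_setIntegral_prod_le_cutNorm (hUm : Measurable (uncurry U))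
    (hU : ∀ x y, |U x y| ≤ 1) {S T : Set ℝ} (hS : MeasurableSet S) (hT : MeasurableSet T) :
    |∫ p in S ×ˢ T, U p.1 p.2 ∂(muI.prod muI)| ≤ cutNorm U := by
  have hint : IntegrableOn (fun p : ℝ × ℝ => U p.1 p.2) (S ×ˢ T) (muI.prod muI) :=
    (integrable_of_abs_le_one hUm fun p => hU p.1 p.2).integrableOn
  rw [setIntegral_prod _ hint, Measure.restrict_restrict hS, inter_comm S]
  simp_rw [Measure.restrict_restrict hT, inter_comm T]
  exact le_csSup (bddAbove_cutNorm_set hU) ⟨S, T, hS, hT, rfl⟩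

lemma muI_real_Iio {c : ℝ} (hc : c ∈ Icc (0 : ℝ) 1) : muI.real (Iio c) = c := by
  rw [measureReal_restrict_apply measurableSet_Iio]
  have : Iio c ∩ Icc 0 1 = Ico 0 c := by
    ext x
    simp only [mem_inter_iff, mem_Iio, mem_Icc, mem_Ico]
    exact ⟨fun h => ⟨h.2.1, h.1⟩, fun h => ⟨h.2, h.1, h.2.le.trans hc.2⟩⟩
  simp [this, hc.1]

lemma abs_integral_mul_mul_le_cutNorm (hUm : Measurable (uncurry U))
    (hU : ∀ x y, |U x y| ≤ 1) {f g : ℝ → ℝ} (hf : Measurable f) (hf01 : ∀ x, f x ∈ Icc (0 : ℝ) 1)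
    (hg : Measurable g) (hg01 : ∀ x, g x ∈ Icc (0 : ℝ) 1) :
    |∫ s, ∫ t, U s t * (f s * g t) ∂muI ∂muI| ≤ cutNorm U := by
  set ν := muI.prod muI
  -- layer cake: `f s * g t` is the `ν`-measure of `{q | q.1 < f s ∧ q.2 < g t}`
  set L : Set ((ℝ × ℝ) × (ℝ × ℝ)) := {r | r.2.1 < f r.1.1 ∧ r.2.2 < g r.1.2}
  have hL : MeasurableSet L :=
    (measurableSet_lt (measurable_fst.comp measurable_snd)
        (hf.comp (measurable_fst.comp measurable_fst))).inter
      (measurableSet_lt (measurable_snd.comp measurable_snd)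
        (hg.comp (measurable_snd.comp measurable_fst)))
  set h : ℝ × ℝ → ℝ × ℝ → ℝ := fun p q => L.indicator (fun r => U r.1.1 r.1.2) (p, q)
  have hh : Integrable (uncurry h) (ν.prod ν) :=
    integrable_of_abs_le_one ((hUm.comp measurable_fst).indicator hL) fun r =>
      (norm_indicator_le_norm_self (s := L) (fun r => U r.1.1 r.1.2) r).trans
        (hU r.1.1 r.1.2)
  have hfiber : ∀ p : ℝ × ℝ, ∫ q, h p q ∂ν = U p.1 p.2 * (f p.1 * g p.2) := by
    intro p
    have : (fun q => h p q) = (Iio (f p.1) ×ˢ Iio (g p.2)).indicator fun _ => U p.1 p.2 :=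
      rfl
    rw [this, integral_indicator_const _ (measurableSet_Iio.prod measurableSet_Iio),
      measureReal_prod_prod, muI_real_Iio (hf01 _), muI_real_Iio (hg01 _), smul_eq_mul, mul_comm]
  have hslice : ∀ q : ℝ × ℝ, |∫ p, h p q ∂ν| ≤ cutNorm U := by
    intro q
    have hS : MeasurableSet {s | q.1 < f s} := measurableSet_lt measurable_const hf
    have hT : MeasurableSet {t | q.2 < g t} := measurableSet_lt measurable_const hg
    have : (fun p => h p q)
        = ({s | q.1 < f s} ×ˢ {t | q.2 < g t}).indicator fun p => U p.1 p.2 := rfl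
    rw [this, integral_indicator (hS.prod hT)]
    exact abs_setIntegral_prod_le_cutNorm hUm hU hS hT
  have hprod : Integrable (fun p : ℝ × ℝ => U p.1 p.2 * (f p.1 * g p.2)) ν := by
    simpa only [uncurry_apply_pair, hfiber] using hh.integral_prod_left
  calc |∫ s, ∫ t, U s t * (f s * g t) ∂muI ∂muI| = |∫ p, ∫ q, h p q ∂ν ∂ν| := by
        simp only [hfiber]
        rw [integral_prod _ hprod]
    _ = |∫ q, ∫ p, h p q ∂ν ∂ν| := by rw [integral_integral_swap hh]
    _ ≤ cutNorm U := abs_integral_le_of_forall_abs_le hslice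

end CutNorm

lemma MeasureTheory.MeasurePreserving.integral_comp_of_aestronglyMeasurable {α β : Type*}
    [MeasurableSpace α] [MeasurableSpace β] {μ : Measure α} {ν : Measure β} {f : α → β}
    (hf : MeasurePreserving f μ ν) {g : β → ℝ} (hg : AEStronglyMeasurable g ν) :
    ∫ x, g (f x) ∂μ = ∫ y, g y ∂ν := by
  rw [← hf.map_eq] at hg ⊢
  exact (integral_map hf.measurable.aemeasurable hg).symm

section PiUpdate

variable {ι α : Type*} [Fintype ι] [DecidableEq ι] [MeasurableSpace α]
  (μ : Measure α) [IsProbabilityMeasure μ]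

lemma measurePreserving_update (a : ι) :
    MeasurePreserving (fun p : (ι → α) × α => update p.1 a p.2)
      ((Measure.pi fun _ => μ).prod μ) (Measure.pi fun _ => μ) := by
  refine ⟨measurable_update', (Measure.pi_eq fun s hs => ?_).symm⟩
  have hpre : (fun p : (ι → α) × α => update p.1 a p.2) ⁻¹' univ.pi s
      = univ.pi (update s a univ) ×ˢ s a := by
    ext ⟨x, t⟩
    simp only [mem_preimage, mem_univ_pi, mem_prod]
    refine (forall_update_iff x fun i u => u ∈ s i).trans ?_
    refine and_comm.trans (and_congr_left' ?_)
    refine Iff.trans ?_ (forall_update_iff s fun i S => x i ∈ S).symm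
    simp
  rw [Measure.map_apply measurable_update' (.univ_pi hs), hpre, Measure.prod_prod,
    Measure.pi_pi]
  simp only [apply_update (fun _ => μ), measure_univ,
    Finset.prod_update_of_mem (Finset.mem_univ a), one_mul]
  rw [mul_comm, Finset.sdiff_singleton_eq_erase,
    Finset.mul_prod_erase _ (fun i => μ (s i)) (Finset.mem_univ a)]

variable {μ} {F : (ι → α) → ℝ}

lemma integral_eq_integral_integral_update (hF : Integrable F (Measure.pi fun _ => μ)) (a : ι) :
    ∫ x, F x ∂Measure.pi (fun _ => μ)
      = ∫ x, ∫ s, F (update x a s) ∂μ ∂Measure.pi (fun _ => μ) := by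
  have hΦ := measurePreserving_update μ a
  rw [← hΦ.integral_comp_of_aestronglyMeasurable hF.aestronglyMeasurable]
  exact integral_prod _ ((hΦ.integrable_comp hF.aestronglyMeasurable).mpr hF)

lemma integrable_integral_update (hF : Integrable F (Measure.pi fun _ => μ)) (a : ι) :
    Integrable (fun x => ∫ s, F (update x a s) ∂μ) (Measure.pi fun _ => μ) :=
  ((measurePreserving_update μ a).integrable_comp hF.aestronglyMeasurable |>.mpr hF)
    |>.integral_prod_left

lemma integral_eq_integral_integral_integral_update (hF : Integrable F (Measure.pi fun _ => μ))
    (a b : ι) :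
    ∫ x, F x ∂Measure.pi (fun _ => μ)
      = ∫ x, ∫ s, ∫ t, F (update (update x a s) b t) ∂μ ∂μ ∂Measure.pi (fun _ => μ) := by
  rw [integral_eq_integral_integral_update hF b,
    integral_eq_integral_integral_update (integrable_integral_update hF b) a]

end PiUpdate

lemma integral_comp_pi_of_measurePreserving {ι α : Type*} [Fintype ι] [MeasurableSpace α]
    {μ : Measure α} [SigmaFinite μ] {φ : α → α} (hφ : MeasurePreserving φ μ μ)
    {F : (ι → α) → ℝ} (hF : AEStronglyMeasurable F (Measure.pi fun _ => μ)) :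
    ∫ x, F (fun i => φ (x i)) ∂Measure.pi (fun _ => μ) = ∫ x, F x ∂Measure.pi (fun _ => μ) :=
  (measurePreserving_pi (fun _ : ι => μ) (fun _ => μ) fun _ => hφ)
    |>.integral_comp_of_aestronglyMeasurable hF

section Counting

variable {ι : Type*}

/-- `homDensity H W` is `homDensityOfPairs (edgeFinset' H) fun _ => W` definitionally. -/
def homDensityOfPairs [Fintype ι] (E : Finset (ι × ι)) (Z : ι × ι → ℝ → ℝ → ℝ) : ℝ :=
  ∫ x, ∏ p ∈ E, Z p (x p.1) (x p.2) ∂(Measure.pi fun _ => muI)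

lemma measurable_apply_pair {V : ℝ → ℝ → ℝ} (hV : Measurable (uncurry V)) (i j : ι) :
    Measurable fun x : ι → ℝ => V (x i) (x j) :=
  hV.comp (f := fun x : ι → ℝ => (x i, x j))
    ((measurable_pi_apply i).prodMk (measurable_pi_apply j))

variable {Z : ι × ι → ℝ → ℝ → ℝ}

lemma measurable_prod_pairs (E : Finset (ι × ι)) (hZ : ∀ p, Measurable (uncurry (Z p))) :
    Measurable fun x : ι → ℝ => ∏ p ∈ E, Z p (x p.1) (x p.2) :=
  Finset.measurable_prod _ fun p _ => measurable_apply_pair (hZ p) p.1 p.2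

lemma prod_pairs_mem_Icc (E : Finset (ι × ι)) (hZ01 : ∀ p x y, Z p x y ∈ Icc (0 : ℝ) 1)
    (x : ι → ℝ) : ∏ p ∈ E, Z p (x p.1) (x p.2) ∈ Icc (0 : ℝ) 1 :=
  E.prod_mem_Icc_zero_one fun p _ => hZ01 p _ _

def hybridKernel [DecidableEq ι] (V V' : ℝ → ℝ → ℝ) (A : Finset (ι × ι)) (p : ι × ι) :
    ℝ → ℝ → ℝ :=
  if p ∈ A then V' else V

lemma measurable_hybridKernel [DecidableEq ι] {V V' : ℝ → ℝ → ℝ} (hV : Measurable (uncurry V))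
    (hV' : Measurable (uncurry V')) (A : Finset (ι × ι)) (p : ι × ι) :
    Measurable (uncurry (hybridKernel V V' A p)) := by
  unfold hybridKernel
  split_ifs <;> assumption

lemma hybridKernel_mem_Icc [DecidableEq ι] {V V' : ℝ → ℝ → ℝ}
    (hV01 : ∀ x y, V x y ∈ Icc (0 : ℝ) 1) (hV'01 : ∀ x y, V' x y ∈ Icc (0 : ℝ) 1)
    (A : Finset (ι × ι)) (p : ι × ι) (x y : ℝ) : hybridKernel V V' A p x y ∈ Icc (0 : ℝ) 1 := by
  unfold hybridKernel
  split_ifs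
  exacts [hV'01 x y, hV01 x y]

variable [Fintype ι]

lemma integrable_prod_pairs (E : Finset (ι × ι)) (hZ : ∀ p, Measurable (uncurry (Z p)))
    (hZ01 : ∀ p x y, Z p x y ∈ Icc (0 : ℝ) 1) :
    Integrable (fun x : ι → ℝ => ∏ p ∈ E, Z p (x p.1) (x p.2)) (Measure.pi fun _ => muI) :=
  integrable_of_abs_le_one (measurable_prod_pairs E hZ)
    fun x => abs_le_one_of_mem_Icc (prod_pairs_mem_Icc E hZ01 x)

lemma homDensityOfPairs_comp_of_measurePreserving (E : Finset (ι × ι))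
    (hZ : ∀ p, Measurable (uncurry (Z p))) {φ : ℝ → ℝ} (hφ : MeasurePreserving φ muI muI) :
    homDensityOfPairs E (fun p x y => Z p (φ x) (φ y)) = homDensityOfPairs E Z :=
  integral_comp_pi_of_measurePreserving hφ (measurable_prod_pairs E hZ).aestronglyMeasurable

variable [DecidableEq ι]

lemma abs_integral_mul_prod_pairs_le_cutNorm {a b : ι} (hab : a ≠ b) {U : ℝ → ℝ → ℝ}
    (hUm : Measurable (uncurry U)) (hU : ∀ x y, |U x y| ≤ 1) (E : Finset (ι × ι))
    (hE : ∀ p ∈ E, p ≠ (a, b) ∧ p ≠ (b, a)) (hZ : ∀ p, Measurable (uncurry (Z p)))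
    (hZ01 : ∀ p x y, Z p x y ∈ Icc (0 : ℝ) 1) :
    |∫ x, U (x a) (x b) * ∏ p ∈ E, Z p (x p.1) (x p.2) ∂(Measure.pi fun _ => muI)|
      ≤ cutNorm U := by
  have hF : Integrable (fun x : ι → ℝ => U (x a) (x b) * ∏ p ∈ E, Z p (x p.1) (x p.2))
      (Measure.pi fun _ => muI) := by
    refine integrable_of_abs_le_one ((measurable_apply_pair hUm a b).mul
      (measurable_prod_pairs E hZ)) fun x => ?_
    rw [abs_mul]
    exact mul_le_one₀ (hU _ _) (abs_nonneg _)
      (abs_le_one_of_mem_Icc (prod_pairs_mem_Icc E hZ01 x))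
  rw [integral_eq_integral_integral_integral_update hF a b]
  refine abs_integral_le_of_forall_abs_le fun x => ?_
  set Ea := E.filter fun p => p.1 = a ∨ p.2 = a
  set Eb := E.filter fun p => ¬(p.1 = a ∨ p.2 = a)
  -- no pair of `E` joins `a` and `b`, so each factor sees at most one of `s`, `t`
  have hsplit : ∀ s t,
      ∏ p ∈ E, Z p (update (update x a s) b t p.1) (update (update x a s) b t p.2)
      = (∏ p ∈ Ea, Z p (update x a s p.1) (update x a s p.2))
        * ∏ p ∈ Eb, Z p (update x b t p.1) (update x b t p.2) := by
    intro s t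
    rw [← Finset.prod_filter_mul_prod_filter_not E fun p => p.1 = a ∨ p.2 = a]
    congr 1
    · refine Finset.prod_congr rfl fun p hp => ?_
      obtain ⟨hpE, hpa⟩ := Finset.mem_filter.mp hp
      have hpb : p.1 ≠ b ∧ p.2 ≠ b := by
        obtain ⟨h1, h2⟩ := hE p hpE
        rcases p with ⟨i, j⟩
        simp only [ne_eq, Prod.mk.injEq, not_and] at h1 h2 hpa ⊢
        rcases hpa with rfl | rfl
        · exact ⟨hab, h1 rfl⟩
        · exact ⟨fun h => h2 h rfl, hab⟩
      rw [update_of_ne hpb.1, update_of_ne hpb.2]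
    · refine Finset.prod_congr rfl fun p hp => ?_
      obtain ⟨hp1, hp2⟩ := not_or.mp (Finset.mem_filter.mp hp).2
      rw [update_comm hab, update_of_ne hp1, update_of_ne hp2]
  simp only [update_self, update_of_ne hab, hsplit]
  exact abs_integral_mul_mul_le_cutNorm
    (f := fun s => ∏ p ∈ Ea, Z p (update x a s p.1) (update x a s p.2))
    (g := fun t => ∏ p ∈ Eb, Z p (update x b t p.1) (update x b t p.2)) hUm hU
    (Finset.measurable_prod _ fun p _ => (measurable_apply_pair (hZ p) p.1 p.2).comp
      (measurable_update x))
    (fun s => prod_pairs_mem_Icc Ea hZ01 _)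
    (Finset.measurable_prod _ fun p _ => (measurable_apply_pair (hZ p) p.1 p.2).comp
      (measurable_update x))
    (fun t => prod_pairs_mem_Icc Eb hZ01 _)

section Hybrid

variable {V V' : ℝ → ℝ → ℝ} (hV : Measurable (uncurry V))
  (hV01 : ∀ x y, V x y ∈ Icc (0 : ℝ) 1) (hV' : Measurable (uncurry V'))
  (hV'01 : ∀ x y, V' x y ∈ Icc (0 : ℝ) 1)
include hV hV01 hV' hV'01

lemma homDensityOfPairs_hybridKernel_sub_insert {E : Finset (ι × ι)} {q : ι × ι} (hq : q ∈ E)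
    {A : Finset (ι × ι)} (hqA : q ∉ A) :
    homDensityOfPairs E (hybridKernel V V' A)
        - homDensityOfPairs E (hybridKernel V V' (insert q A))
      = ∫ x, (V (x q.1) (x q.2) - V' (x q.1) (x q.2))
          * ∏ p ∈ E.erase q, hybridKernel V V' A p (x p.1) (x p.2)
          ∂(Measure.pi fun _ => muI) := by
  have hint := fun A => integrable_prod_pairs E (measurable_hybridKernel hV hV' A)
    (hybridKernel_mem_Icc hV01 hV'01 A)
  rw [homDensityOfPairs, homDensityOfPairs, ← integral_sub (hint A) (hint _)]
  refine integral_congr_ae (ae_of_all _ fun x => ?_)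
  dsimp only
  have hrest : ∏ p ∈ E.erase q, hybridKernel V V' (insert q A) p (x p.1) (x p.2)
      = ∏ p ∈ E.erase q, hybridKernel V V' A p (x p.1) (x p.2) :=
    Finset.prod_congr rfl fun p hp => by simp [hybridKernel, Finset.ne_of_mem_erase hp]
  rw [← Finset.mul_prod_erase E _ hq, ← Finset.mul_prod_erase E _ hq, hrest]
  simp [hybridKernel, hqA, sub_mul]

theorem abs_homDensityOfPairs_sub_le (E : Finset (ι × ι))
    (hE : ∀ q ∈ E, q.1 ≠ q.2 ∧ q.swap ∉ E) :
    |homDensityOfPairs E (fun _ => V) - homDensityOfPairs E (fun _ => V')|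
      ≤ E.card * cutNorm fun x y => V x y - V' x y := by
  have hempty : (fun _ => V) = hybridKernel V V' (∅ : Finset (ι × ι)) := by
    funext p; simp [hybridKernel]
  have hfull : homDensityOfPairs E (fun _ => V') = homDensityOfPairs E (hybridKernel V V' E) :=
    integral_congr_ae (ae_of_all _ fun x =>
      Finset.prod_congr rfl fun p hp => by simp [hybridKernel, hp])
  rw [hempty, hfull]
  refine E.abs_sub_le_card_mul_of_abs_sub_insert_le
    (fun A => homDensityOfPairs E (hybridKernel V V' A)) fun q hq A _ hqA => ?_
  rw [homDensityOfPairs_hybridKernel_sub_insert hV hV01 hV' hV'01 hq hqA]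
  exact abs_integral_mul_prod_pairs_le_cutNorm (U := fun x y => V x y - V' x y) (hE q hq).1
    (hV.sub hV') (fun x y => abs_sub_le_of_nonneg_of_le (hV01 x y).1 (hV01 x y).2
      (hV'01 x y).1 (hV'01 x y).2) _
    (fun p hp => ⟨Finset.ne_of_mem_erase hp,
      fun h => (hE q hq).2 (by rw [h] at hp; exact Finset.mem_of_mem_erase hp)⟩)
    (measurable_hybridKernel hV hV' A) (hybridKernel_mem_Icc hV01 hV'01 A)

end Hybrid

end Counting

lemma edgeFinset'_fst_ne_snd_and_swap_notMem {m : ℕ} (G : SimpleGraph (Fin m))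
    [DecidableRel G.Adj] :
    ∀ q ∈ edgeFinset' G, q.1 ≠ q.2 ∧ q.swap ∉ edgeFinset' G := by
  intro q hq
  have hlt := (Finset.mem_filter.mp hq).2.1
  exact ⟨hlt.ne, fun h => (Finset.mem_filter.mp h).2.1.not_gt hlt⟩

/-- the counting lemma
`|t(H,W) − t(H,W')| ≤ e(H) · d_□(W,W')`. -/
theorem counting_lemma {m : ℕ} (H : SimpleGraph (Fin m)) [DecidableRel H.Adj]
    (W W' : ℝ → ℝ → ℝ) (hW : IsGraphon W) (hW' : IsGraphon W') :
    |homDensity H W - homDensity H W'| ≤ (edgeCount H : ℝ) * cutDist W W' := by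
  refine le_mul_csInf_of_forall_le_mul ?_ (Nat.cast_nonneg _) ?_
  · exact ⟨_, id, .id muI, rfl⟩
  rintro r ⟨φ, hφ, rfl⟩
  have hWφ : Measurable (uncurry fun x y => W (φ x) (φ y)) :=
    hW.1.comp (hφ.measurable.prodMap hφ.measurable)
  have hinv : homDensity H W = homDensityOfPairs (edgeFinset' H) fun _ x y => W (φ x) (φ y) :=
    (homDensityOfPairs_comp_of_measurePreserving _ (fun _ => hW.1) hφ).symm
  rw [hinv]
  exact abs_homDensityOfPairs_sub_le hWφ (fun x y => hW.2.2 _ _) hW'.1 hW'.2.2 _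
    (edgeFinset'_fst_ne_snd_and_swap_notMem H)
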